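/- There is a universal constant c > 0 such that the following holds. Let p, q be distributions on [k] with 0 < d_h²(p,q) ≤ 1/e, and let m := min(k, 1 + log(1/d_h²(p,q))). For every integer ℓ with 2 < ℓ ≤ m, at least one of the following holds: (1) there exists a channel T ∈ T_{ℓ,k} such that, writing p' = Tp and q' = Tq, Σ_{i : q'_i > 0 and 1/2 ≤ p'_i/q'_i ≤ 2} (√q'_i − √p'_i)² ≥ c·d_h²(p,q)·ℓ/m; or (2) there exists a channel T ∈ T_{2,k} with d_h²(Tp, Tq) ≥ c·d_h²(p,q). -/

import Mathlib

/-!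
Split `d_h²(p,q)` into the part carried by comparable elements (`q i / 2 ≤ p i ≤ 2 q i`) and
the rest. If the rest carries half of it, then either the elements with `2 p i < q i` or the
remaining incomparable ones carry a quarter, and merging them into one output of a binary channel
loses only a factor 16: when `2 X ≤ Y`, `(√Y - √X)² ≥ Y / 16 ≥ (1/16) Σ (√yᵢ - √xᵢ)²`.

Otherwise write `√pᵢ = (1 + δᵢ) √qᵢ` for comparable `i`, so that `i` contributes `δᵢ² qᵢ` and
`|δᵢ| < 1/2`. Elements with `δᵢ² < d_h²/8` carry at most `d_h²/8` in total, since `Σ qᵢ ≤ 1`.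
The others are grouped by the sign of `δᵢ` and the dyadic scale `2ʲ ≤ δᵢ² < 2ʲ⁺¹`; there are at
most `4 min(k, 1 + log(1/d_h²))` groups, and merging a group loses at most a factor 2, because
the merged ratio `Σp/Σq` again lies beyond `(1 ± 2^(j/2))²`. Sending the `ℓ - 1` heaviest groups
to distinct outputs, and everything else to the last one, keeps a fraction `(ℓ - 1)/(4m)` of
their mass, all of it on comparable outputs.
-/

open scoped Classical ENNReal
open Finset

noncomputable section

/-- `p` is a probability distribution on `Fin k`. -/
def IsDist {k : ℕ} (p : Fin k → ℝ) : Prop :=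
  (∀ i, 0 ≤ p i) ∧ ∑ i, p i = 1

/-- `T` is a channel from `[k]` to `[ℓ]`: nonnegative entries, columns sum to 1. -/
def IsChannel {ℓ k : ℕ} (T : Matrix (Fin ℓ) (Fin k) ℝ) : Prop :=
  (∀ r c, 0 ≤ T r c) ∧ ∀ c, ∑ r, T r c = 1

/-- Squared Hellinger divergence `d_h²(p,q) = Σ_i (√p_i − √q_i)²`. -/
def hellingerSq {k : ℕ} (p q : Fin k → ℝ) : ℝ :=
  ∑ i, (Real.sqrt (p i) - Real.sqrt (q i)) ^ 2

/-- Total variation distance `d_TV(p,q) = (1/2) Σ_i |p_i − q_i|`. -/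
def tvDist {k : ℕ} (p q : Fin k → ℝ) : ℝ :=
  (1 / 2) * ∑ i, |p i - q i|

/-- `T` is an `ε`-LDP channel: `T(r,c) ≤ e^ε T(r,c')` for all rows `r`, columns `c, c'`. -/
def IsLDP {ℓ k : ℕ} (ε : ℝ) (T : Matrix (Fin ℓ) (Fin k) ℝ) : Prop :=
  IsChannel T ∧ ∀ r c c', T r c ≤ Real.exp ε * T r c'

open Real
open scoped Matrix

def Comparable (x y : ℝ) : Prop :=
  0 < y ∧ y ≤ 2 * x ∧ x ≤ 2 * y

lemma le_sixteen_mul_sq_sqrt_sub_sqrt {x y : ℝ} (hx : 0 ≤ x) (hxy : 2 * x ≤ y) :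
    y ≤ 16 * (√y - √x) ^ 2 := by
  have hx' := sq_sqrt hx
  have hy' := sq_sqrt (by linarith : 0 ≤ y)
  have h4 : 4 * √x ≤ 3 * √y := by
    nlinarith [sqrt_nonneg x, sqrt_nonneg y]
  nlinarith [sqrt_nonneg x, sqrt_nonneg y]

lemma sq_sqrt_sub_sqrt_le {x y : ℝ} (hx : 0 ≤ x) (hxy : x ≤ y) : (√y - √x) ^ 2 ≤ y := by
  have := sqrt_le_sqrt hxy
  nlinarith [sqrt_nonneg x, sq_sqrt (hx.trans hxy)]

lemma sq_mul_le_sq_sqrt_sub_sqrt {x y a : ℝ} (hx : 0 ≤ x) (hy : 0 ≤ y) (ha : 0 ≤ a)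
    (ha1 : a ≤ 1) (h : (1 + a) ^ 2 * y ≤ x ∨ x ≤ (1 - a) ^ 2 * y) :
    a ^ 2 * y ≤ (√y - √x) ^ 2 := by
  have hx' := sq_sqrt hx
  have hy' := sq_sqrt hy
  have hsx := sqrt_nonneg x
  have hsy := sqrt_nonneg y
  rcases h with h | h
  · have : (1 + a) * √y ≤ √x :=
      (pow_le_pow_iff_left₀ (by positivity) hsx two_ne_zero).1 (by nlinarith)
    nlinarith
  · have : √x ≤ (1 - a) * √y :=
      (pow_le_pow_iff_left₀ hsx (by nlinarith) two_ne_zero).1 (by nlinarith)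
    have hgap : a * √y ≤ √y - √x := by linarith
    nlinarith [mul_le_mul hgap hgap (by positivity) (by nlinarith)]

namespace Comparable

variable {x y : ℝ}

lemma sq_sqrt_sub_sqrt_div_lt (h : Comparable x y) : (√y - √x) ^ 2 / y < 1 / 4 := by
  obtain ⟨hy, hyx, hxy⟩ := h
  have hx' := sq_sqrt (by linarith : 0 ≤ x)
  have hy' := sq_sqrt hy.le
  have hsx := sqrt_nonneg x
  have hsy := sqrt_pos.2 hy
  rw [div_lt_iff₀ hy]
  have h1 : √y < 2 * √x := by nlinarith
  have h2 : 2 * √x < 3 * √y := by nlinarith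
  nlinarith

lemma one_add_sq_mul_le {a : ℝ} (h : Comparable x y) (ha : 0 ≤ a) (hyx : y < x)
    (hax : a ^ 2 ≤ (√y - √x) ^ 2 / y) : (1 + a) ^ 2 * y ≤ x := by
  have hy := h.1
  rw [le_div_iff₀ hy] at hax
  have hx' := sq_sqrt (by linarith : 0 ≤ x)
  have hy' := sq_sqrt hy.le
  have hs : √y ≤ √x := sqrt_le_sqrt hyx.le
  have : a * √y ≤ √x - √y :=
    (pow_le_pow_iff_left₀ (by positivity) (by linarith) two_ne_zero).1 (by nlinarith)
  nlinarith [sqrt_nonneg y]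

lemma le_one_sub_sq_mul {a : ℝ} (h : Comparable x y) (ha : 0 ≤ a) (hxy : x ≤ y)
    (hax : a ^ 2 ≤ (√y - √x) ^ 2 / y) : x ≤ (1 - a) ^ 2 * y := by
  have hy := h.1
  rw [le_div_iff₀ hy] at hax
  have hx' := sq_sqrt (by linarith [h.2.1] : 0 ≤ x)
  have hy' := sq_sqrt hy.le
  have hs : √x ≤ √y := sqrt_le_sqrt hxy
  have : a * √y ≤ √y - √x :=
    (pow_le_pow_iff_left₀ (by positivity) (by linarith) two_ne_zero).1 (by nlinarith)
  nlinarith [sqrt_nonneg x, sqrt_nonneg y]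

end Comparable

lemma Comparable.sum {ι : Type*} {s : Finset ι} {x y : ι → ℝ} (hs : s.Nonempty)
    (h : ∀ i ∈ s, Comparable (x i) (y i)) : Comparable (∑ i ∈ s, x i) (∑ i ∈ s, y i) := by
  refine ⟨sum_pos (fun i hi => (h i hi).1) hs, ?_, ?_⟩
  · rw [mul_sum]; exact sum_le_sum fun i hi => (h i hi).2.1
  · rw [mul_sum]; exact sum_le_sum fun i hi => (h i hi).2.2

lemma sum_sq_sqrt_sub_le_two_mul {ι : Type*} {G : Finset ι} {p q : ι → ℝ} {b : ℝ} (hb : 0 ≤ b)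
    (hcomp : ∀ i ∈ G, Comparable (p i) (q i))
    (hscale : ∀ i ∈ G, b ≤ (√(q i) - √(p i)) ^ 2 / q i ∧ (√(q i) - √(p i)) ^ 2 / q i < 2 * b)
    (hside : (∀ i ∈ G, q i < p i) ∨ (∀ i ∈ G, p i ≤ q i)) :
    ∑ i ∈ G, (√(q i) - √(p i)) ^ 2 ≤ 2 * (√(∑ i ∈ G, q i) - √(∑ i ∈ G, p i)) ^ 2 := by
  rcases G.eq_empty_or_nonempty with rfl | ⟨i₀, hi₀⟩
  · simp
  set a := √b
  have ha : a ^ 2 = b := sq_sqrt hb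
  have ha0 : 0 ≤ a := sqrt_nonneg b
  have ha1 : a ≤ 1 := by nlinarith [(hcomp i₀ hi₀).sq_sqrt_sub_sqrt_div_lt, (hscale i₀ hi₀).1]
  have hmerged : (1 + a) ^ 2 * ∑ i ∈ G, q i ≤ ∑ i ∈ G, p i ∨
      ∑ i ∈ G, p i ≤ (1 - a) ^ 2 * ∑ i ∈ G, q i := by
    rw [mul_sum, mul_sum]
    refine hside.imp (fun h => sum_le_sum fun i hi => ?_) (fun h => sum_le_sum fun i hi => ?_)
    · exact (hcomp i hi).one_add_sq_mul_le ha0 (h i hi) (ha ▸ (hscale i hi).1)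
    · exact (hcomp i hi).le_one_sub_sq_mul ha0 (h i hi) (ha ▸ (hscale i hi).1)
  have hcompG := Comparable.sum ⟨i₀, hi₀⟩ hcomp
  calc ∑ i ∈ G, (√(q i) - √(p i)) ^ 2 ≤ ∑ i ∈ G, 2 * b * q i := sum_le_sum fun i hi => by
        have := (hscale i hi).2
        rw [div_lt_iff₀ (hcomp i hi).1] at this
        exact this.le
    _ = 2 * (a ^ 2 * ∑ i ∈ G, q i) := by rw [ha, mul_sum, mul_sum]; ring_nf
    _ ≤ _ := by
        gcongr
        exact sq_mul_le_sq_sqrt_sub_sqrt (by linarith [hcompG.1, hcompG.2.1]) hcompG.1.le ha0 ha1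
          hmerged

section ComparableSet

variable {n : ℕ} (p q : Fin n → ℝ)

-- Written with the ratio `p i / q i` exactly as in `stmt7`, so that the sum there is
-- `comparableHellingerSq (T *ᵥ p) (T *ᵥ q)` by definition.
def comparableSet : Finset (Fin n) :=
  univ.filter (fun i => 0 < q i ∧ 1 / 2 ≤ p i / q i ∧ p i / q i ≤ 2)

def comparableHellingerSq : ℝ :=
  ∑ i ∈ comparableSet p q, (√(q i) - √(p i)) ^ 2

variable {p q}

lemma mem_comparableSet {i : Fin n} : i ∈ comparableSet p q ↔ Comparable (p i) (q i) := by
  simp only [comparableSet, mem_filter, mem_univ, true_and, Comparable]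
  refine and_congr_right fun hq => ?_
  rw [le_div_iff₀ hq, div_le_iff₀ hq]
  constructor <;> rintro ⟨h₁, h₂⟩ <;> constructor <;> linarith

lemma sum_le_comparableHellingerSq {O : Finset (Fin n)} (hO : ∀ r ∈ O, Comparable (p r) (q r)) :
    ∑ r ∈ O, (√(q r) - √(p r)) ^ 2 ≤ comparableHellingerSq p q :=
  sum_le_sum_of_subset_of_nonneg (fun r hr => mem_comparableSet.2 (hO r hr))
    fun _ _ _ => sq_nonneg _

lemma hellingerSq_eq_comparableHellingerSq_add :
    hellingerSq p q =
      comparableHellingerSq p q + ∑ i ∈ (comparableSet p q)ᶜ, (√(p i) - √(q i)) ^ 2 := by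
  rw [hellingerSq, comparableHellingerSq, ← sum_add_sum_compl (comparableSet p q)]
  simp only [sub_sq_comm (√(q _))]

end ComparableSet

section ChannelOfMap

variable {k ℓ : ℕ}

def channelOfMap (f : Fin k → Fin ℓ) : Matrix (Fin ℓ) (Fin k) ℝ :=
  Matrix.of fun r c => if f c = r then 1 else 0

lemma isChannel_channelOfMap (f : Fin k → Fin ℓ) : IsChannel (channelOfMap f) :=
  ⟨fun r c => by simp only [channelOfMap, Matrix.of_apply]; split_ifs <;> norm_num,
    fun c => by simp [channelOfMap]⟩

lemma channelOfMap_mulVec (f : Fin k → Fin ℓ) (p : Fin k → ℝ) (r : Fin ℓ) :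
    (channelOfMap f *ᵥ p) r = ∑ c ∈ univ with f c = r, p c := by
  simp [channelOfMap, Matrix.mulVec, dotProduct, sum_filter]

lemma sq_sqrt_sum_sub_sqrt_sum_le_hellingerSq (f : Fin k → Fin ℓ) (p q : Fin k → ℝ) (r : Fin ℓ) :
    (√(∑ c ∈ univ with f c = r, p c) - √(∑ c ∈ univ with f c = r, q c)) ^ 2 ≤
      hellingerSq (channelOfMap f *ᵥ p) (channelOfMap f *ᵥ q) := by
  simp only [hellingerSq, channelOfMap_mulVec]
  exact single_le_sum (f := fun r => (√(∑ c ∈ univ with f c = r, p c) -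
    √(∑ c ∈ univ with f c = r, q c)) ^ 2) (fun _ _ => sq_nonneg _) (mem_univ r)

end ChannelOfMap

section Binary

variable {k : ℕ} {p q : Fin k → ℝ}

lemma exists_binary_channel_sum_le (A : Finset (Fin k)) (hq : ∀ i ∈ A, 0 ≤ q i)
    (hA : ∀ i ∈ A, 2 * q i ≤ p i) :
    ∃ T : Matrix (Fin 2) (Fin k) ℝ, IsChannel T ∧
      ∑ i ∈ A, (√(p i) - √(q i)) ^ 2 ≤ 16 * hellingerSq (T *ᵥ p) (T *ᵥ q) := by
  let f : Fin k → Fin 2 := fun i => if i ∈ A then 0 else 1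
  have hfiber : univ.filter (fun c => f c = 0) = A := by ext i; by_cases hi : i ∈ A <;> simp [f, hi]
  refine ⟨channelOfMap f, isChannel_channelOfMap f, ?_⟩
  have hmerge := sq_sqrt_sum_sub_sqrt_sum_le_hellingerSq f p q 0
  rw [hfiber] at hmerge
  calc ∑ i ∈ A, (√(p i) - √(q i)) ^ 2 ≤ ∑ i ∈ A, p i :=
        sum_le_sum fun i hi => sq_sqrt_sub_sqrt_le (hq i hi) (by linarith [hA i hi, hq i hi])
    _ ≤ 16 * (√(∑ i ∈ A, p i) - √(∑ i ∈ A, q i)) ^ 2 :=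
        le_sixteen_mul_sq_sqrt_sub_sqrt (sum_nonneg hq) (by rw [mul_sum]; exact sum_le_sum hA)
    _ ≤ _ := by gcongr

lemma hellingerSq_comm (p q : Fin k → ℝ) : hellingerSq p q = hellingerSq q p := by
  simp only [hellingerSq, sub_sq_comm (√(p _))]

lemma exists_binary_channel_hellingerSq_sub_le (hp : ∀ i, 0 ≤ p i) (hq : ∀ i, 0 ≤ q i) :
    ∃ T : Matrix (Fin 2) (Fin k) ℝ, IsChannel T ∧
      hellingerSq p q - comparableHellingerSq p q ≤ 32 * hellingerSq (T *ᵥ p) (T *ᵥ q) := by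
  set I := (comparableSet p q)ᶜ
  have hsmall : ∀ i ∈ I.filter (fun i => 2 * p i < q i), 2 * p i ≤ q i :=
    fun i hi => (mem_filter.1 hi).2.le
  have hlarge : ∀ i ∈ I.filter (fun i => ¬ 2 * p i < q i), 2 * q i ≤ p i := by
    intro i hi
    obtain ⟨hiI, hpq⟩ := mem_filter.1 hi
    have hnot : ¬ Comparable (p i) (q i) := fun h => mem_compl.1 hiI (mem_comparableSet.2 h)
    rcases (hq i).eq_or_lt with h0 | hpos
    · linarith [hp i]
    · by_contra hlt
      exact hnot ⟨hpos, by linarith, by linarith⟩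
  obtain ⟨T₁, hT₁, h₁⟩ := exists_binary_channel_sum_le (p := q) (q := p) _ (fun i _ => hp i) hsmall
  obtain ⟨T₂, hT₂, h₂⟩ := exists_binary_channel_sum_le _ (fun i _ => hq i) hlarge
  rw [hellingerSq_comm] at h₁
  simp only [sub_sq_comm (√(q _))] at h₁
  have hsplit := hellingerSq_eq_comparableHellingerSq_add (p := p) (q := q)
  rw [← sum_filter_add_sum_filter_not I (fun i => 2 * p i < q i)] at hsplit
  rcases le_total (hellingerSq (T₁ *ᵥ p) (T₁ *ᵥ q)) (hellingerSq (T₂ *ᵥ p) (T₂ *ᵥ q)) with h | h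
  · exact ⟨T₂, hT₂, by linarith⟩
  · exact ⟨T₁, hT₁, by linarith⟩

end Binary

section Selection

variable {α : Type*} [DecidableEq α]

lemma Finset.exists_subset_card_eq_mul_sum_le (b : α → ℝ) {n : ℕ} (V : Finset α)
    (hn : n ≤ V.card) : ∃ W ⊆ V, W.card = n ∧ n * ∑ v ∈ V, b v ≤ V.card * ∑ v ∈ W, b v := by
  rcases Nat.eq_zero_or_pos n with rfl | hn₀
  · exact ⟨∅, empty_subset V, rfl, by simp⟩
  induction V using Finset.strongInduction with
  | H V ih =>
    rcases hn.eq_or_lt with rfl | hlt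
    · exact ⟨V, subset_rfl, rfl, le_rfl⟩
    obtain ⟨v₀, hv₀, hmin⟩ := V.exists_min_image b (card_pos.1 (by omega))
    have hcard : (V.erase v₀).card + 1 = V.card := card_erase_add_one hv₀
    obtain ⟨W, hWV, hWn, hW⟩ := ih _ (erase_ssubset hv₀) (by omega)
    refine ⟨W, hWV.trans (erase_subset _ _), hWn, ?_⟩
    have hv₀avg : ((V.erase v₀).card : ℝ) * b v₀ ≤ ∑ v ∈ V.erase v₀, b v := by
      simpa using card_nsmul_le_sum _ b _ fun v hv => hmin v (mem_of_mem_erase hv)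
    rw [← add_sum_erase V b hv₀, ← hcard]
    have hpos : (0 : ℝ) < (V.erase v₀).card := by
      exact_mod_cast hn₀.trans_le (hWn ▸ card_le_card hWV)
    refine le_of_mul_le_mul_left ?_ hpos
    push_cast
    nlinarith [mul_le_mul_of_nonneg_left hv₀avg (Nat.cast_nonneg (α := ℝ) n)]

lemma Finset.exists_subset_card_le_mul_sum_le (V : Finset α) {b : α → ℝ}
    (hb : ∀ v ∈ V, 0 ≤ b v) {n : ℕ} {N : ℝ} (hn : n ≤ N) (hV : V.card ≤ N) :
    ∃ W ⊆ V, W.card ≤ n ∧ n * ∑ v ∈ V, b v ≤ N * ∑ v ∈ W, b v := by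
  have hVb := sum_nonneg hb
  rcases le_total n V.card with hnV | hVn
  · obtain ⟨W, hWV, hWn, hW⟩ := V.exists_subset_card_eq_mul_sum_le b hnV
    refine ⟨W, hWV, hWn.le, hW.trans ?_⟩
    gcongr
    exact sum_nonneg fun v hv => hb v (hWV hv)
  · exact ⟨V, subset_rfl, hVn, by gcongr⟩

end Selection

section Fibers

variable {k ℓ : ℕ} {β : Type*} [DecidableEq β]

lemma Finset.exists_injOn_fin_of_card_lt (W : Finset β) (hW : W.card < ℓ) :
    ∃ (e : β → Fin ℓ) (r₀ : Fin ℓ), Set.InjOn e W ∧ ∀ v ∈ W, e v ≠ r₀ := by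
  let r₀ : Fin ℓ := ⟨W.card, hW⟩
  refine ⟨fun v => if hv : v ∈ W then Fin.castLE hW.le (W.equivFin ⟨v, hv⟩) else r₀, r₀, ?_, ?_⟩
  · intro v hv w hw hvw
    simp only [mem_coe] at hv hw
    simp only [dif_pos hv, dif_pos hw] at hvw
    simpa using W.equivFin.injective (Fin.castLE_injective _ hvw)
  · intro v hv h
    simp only [dif_pos hv] at h
    exact absurd (congrArg Fin.val h) (W.equivFin ⟨v, hv⟩).isLt.ne

lemma exists_channel_sum_fiber_le (p q : Fin k → ℝ) (R : Finset (Fin k)) (key : Fin k → β)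
    (W : Finset β) (hW : W.card < ℓ)
    (hcomp : ∀ v ∈ W, Comparable (∑ i ∈ R with key i = v, p i) (∑ i ∈ R with key i = v, q i)) :
    ∃ T : Matrix (Fin ℓ) (Fin k) ℝ, IsChannel T ∧
      ∑ v ∈ W, (√(∑ i ∈ R with key i = v, q i) - √(∑ i ∈ R with key i = v, p i)) ^ 2 ≤
        comparableHellingerSq (T *ᵥ p) (T *ᵥ q) := by
  obtain ⟨e, r₀, he, hr₀⟩ := W.exists_injOn_fin_of_card_lt hW
  let f : Fin k → Fin ℓ := fun i => if i ∈ R ∧ key i ∈ W then e (key i) else r₀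
  have hfiber : ∀ v ∈ W, univ.filter (fun i => f i = e v) = R.filter (fun i => key i = v) := by
    intro v hv
    ext i
    simp only [mem_filter, mem_univ, true_and, f]
    split_ifs with hi
    · exact ⟨fun h => ⟨hi.1, he hi.2 hv h⟩, fun h => h.2 ▸ rfl⟩
    · exact ⟨fun h => (hr₀ v hv h.symm).elim, fun h => (hi ⟨h.1, h.2 ▸ hv⟩).elim⟩
  have hmulVec (x : Fin k → ℝ) (v : β) (hv : v ∈ W) :
      (channelOfMap f *ᵥ x) (e v) = ∑ i ∈ R with key i = v, x i := by
    rw [channelOfMap_mulVec, hfiber v hv]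
  refine ⟨channelOfMap f, isChannel_channelOfMap f, ?_⟩
  calc _ = ∑ r ∈ W.image e, (√((channelOfMap f *ᵥ q) r) - √((channelOfMap f *ᵥ p) r)) ^ 2 := by
        rw [sum_image he]
        exact sum_congr rfl fun v hv => by rw [hmulVec q v hv, hmulVec p v hv]
    _ ≤ _ := by
        refine sum_le_comparableHellingerSq fun r hr => ?_
        obtain ⟨v, hv, rfl⟩ := mem_image.1 hr
        rw [hmulVec p v hv, hmulVec q v hv]
        exact hcomp v hv

end Fibers

lemma toNat_one_sub_log_two_le {h : ℝ} (hh : 0 < h) (hh1 : h ≤ 1) :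
    ((1 - Int.log 2 h).toNat : ℝ) ≤ 2 * (1 + log (1 / h)) := by
  set K := Int.log 2 h
  have hK : K < 1 := (Int.lt_zpow_iff_log_lt one_lt_two hh).1 (by norm_num; linarith)
  have hcast : ((1 - K).toNat : ℝ) = 1 - K := by
    rw [← Int.cast_natCast, Int.toNat_of_nonneg (by omega)]
    push_cast
    ring
  have hlog : -((K : ℝ) + 1) * log 2 < log (1 / h) := by
    have h2 : h < (2 : ℝ) ^ (K + 1) := by
      exact_mod_cast Int.lt_zpow_succ_log_self (R := ℝ) one_lt_two h
    have := log_lt_log hh h2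
    rw [log_zpow] at this
    push_cast at this
    rw [one_div, log_inv]
    linarith
  have hL : 0 ≤ log (1 / h) := log_nonneg (by rw [le_div_iff₀ hh]; linarith)
  have hlog2 := log_two_gt_d9
  rw [hcast]
  rcases le_or_gt (-((K : ℝ) + 1)) 0 with hneg | hpos
  · linarith
  · nlinarith

section Buckets

variable {k : ℕ} (p q : Fin k → ℝ)

def bucket (i : Fin k) : ℤ × Bool :=
  (Int.log 2 ((√(q i) - √(p i)) ^ 2 / q i), decide (q i < p i))

def relevantSet (j : ℤ) : Finset (Fin k) :=
  (comparableSet p q).filter fun i => (2 : ℝ) ^ j ≤ (√(q i) - √(p i)) ^ 2 / q i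

variable {p q}

lemma comparableHellingerSq_le_sum_relevantSet_add (hq : ∀ i, 0 ≤ q i) (hq1 : ∑ i, q i ≤ 1)
    (j : ℤ) :
    comparableHellingerSq p q ≤ ∑ i ∈ relevantSet p q j, (√(q i) - √(p i)) ^ 2 + 2 ^ j := by
  rw [comparableHellingerSq, relevantSet, ← sum_filter_add_sum_filter_not (comparableSet p q)
    fun i => (2 : ℝ) ^ j ≤ (√(q i) - √(p i)) ^ 2 / q i]
  gcongr
  calc _ ≤ ∑ i ∈ comparableSet p q with ¬(2 : ℝ) ^ j ≤ (√(q i) - √(p i)) ^ 2 / q i, 2 ^ j * q i :=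
        sum_le_sum fun i hi => by
          obtain ⟨hiS, hlt⟩ := mem_filter.1 hi
          rw [not_le, div_lt_iff₀ (mem_comparableSet.1 hiS).1] at hlt
          exact hlt.le
    _ ≤ ∑ i, 2 ^ j * q i :=
        sum_le_sum_of_subset_of_nonneg (subset_univ _) fun i _ _ =>
          mul_nonneg (by positivity) (hq i)
    _ ≤ 2 ^ j := by
        rw [← mul_sum]
        exact mul_le_of_le_one_right (by positivity) hq1

lemma le_sum_relevantSet_log_sub_three (hq : ∀ i, 0 ≤ q i) (hq1 : ∑ i, q i ≤ 1) {h : ℝ}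
    (hh : 0 < h) (hC : h / 2 ≤ comparableHellingerSq p q) :
    3 * h / 8 ≤ ∑ i ∈ relevantSet p q (Int.log 2 h - 3), (√(q i) - √(p i)) ^ 2 := by
  have h2K : (2 : ℝ) ^ (Int.log 2 h - 3) ≤ h / 8 := by
    have := Int.zpow_log_le_self (R := ℝ) one_lt_two hh
    rw [zpow_sub₀ two_ne_zero]
    push_cast at this
    linarith
  linarith [comparableHellingerSq_le_sum_relevantSet_add (p := p) hq hq1 (Int.log 2 h - 3)]

lemma card_image_bucket_le (j : ℤ) :
    ((relevantSet p q j).image (bucket p q)).card ≤ 2 * (-2 - j).toNat := by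
  have hsub : (relevantSet p q j).image (bucket p q) ⊆ Icc j (-3) ×ˢ univ := by
    intro v hv
    obtain ⟨i, hi, rfl⟩ := mem_image.1 hv
    obtain ⟨hiS, hj⟩ := mem_filter.1 hi
    have hlt := (mem_comparableSet.1 hiS).sq_sqrt_sub_sqrt_div_lt
    have hpos : 0 < (√(q i) - √(p i)) ^ 2 / q i := lt_of_lt_of_le (by positivity) hj
    simp only [bucket, mem_product, mem_Icc, mem_univ, and_true]
    refine ⟨(Int.zpow_le_iff_le_log one_lt_two hpos).1 (by exact_mod_cast hj), ?_⟩
    have := (Int.lt_zpow_iff_log_lt one_lt_two hpos (x := -2)).1 (by norm_num; linarith)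
    omega
  calc _ ≤ (Icc j (-3) ×ˢ (univ : Finset Bool)).card := card_le_card hsub
    _ = 2 * (-2 - j).toNat := by
        rw [card_product, Int.card_Icc, card_univ, Fintype.card_bool, mul_comm]
        ring_nf

lemma bounds_of_bucket_eq {i : Fin k} {j j' : ℤ} {s : Bool} (hi : i ∈ relevantSet p q j)
    (hkey : bucket p q i = (j', s)) :
    (2 : ℝ) ^ j' ≤ (√(q i) - √(p i)) ^ 2 / q i ∧ (√(q i) - √(p i)) ^ 2 / q i < 2 * 2 ^ j' := by
  have hpos : 0 < (√(q i) - √(p i)) ^ 2 / q i := lt_of_lt_of_le (by positivity) (mem_filter.1 hi).2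
  simp only [bucket, Prod.mk.injEq] at hkey
  have hlow := Int.zpow_log_le_self (R := ℝ) one_lt_two hpos
  have hhigh := Int.lt_zpow_succ_log_self (R := ℝ) one_lt_two ((√(q i) - √(p i)) ^ 2 / q i)
  push_cast at hlow hhigh
  rw [hkey.1] at hlow hhigh
  rw [zpow_add_one₀ two_ne_zero] at hhigh
  exact ⟨hlow, by linarith⟩

lemma comparable_sum_fiber_bucket {j : ℤ} {v : ℤ × Bool}
    (hv : v ∈ (relevantSet p q j).image (bucket p q)) :
    Comparable (∑ i ∈ relevantSet p q j with bucket p q i = v, p i)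
      (∑ i ∈ relevantSet p q j with bucket p q i = v, q i) := by
  obtain ⟨i₀, hi₀, rfl⟩ := mem_image.1 hv
  exact Comparable.sum ⟨i₀, mem_filter.2 ⟨hi₀, rfl⟩⟩ fun i hi =>
    mem_comparableSet.1 (mem_filter.1 (mem_filter.1 hi).1).1

lemma sum_fiber_bucket_le (j : ℤ) (v : ℤ × Bool) :
    ∑ i ∈ relevantSet p q j with bucket p q i = v, (√(q i) - √(p i)) ^ 2 ≤
      2 * (√(∑ i ∈ relevantSet p q j with bucket p q i = v, q i) -
        √(∑ i ∈ relevantSet p q j with bucket p q i = v, p i)) ^ 2 := by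
  obtain ⟨j', s⟩ := v
  have hside (i) (hi : i ∈ (relevantSet p q j).filter (bucket p q · = (j', s))) :
      decide (q i < p i) = s := by
    have hkey := (mem_filter.1 hi).2
    simp only [bucket, Prod.mk.injEq] at hkey
    exact hkey.2
  refine sum_sq_sqrt_sub_le_two_mul (b := 2 ^ j') (by positivity)
    (fun i hi => mem_comparableSet.1 (mem_filter.1 (mem_filter.1 hi).1).1)
    (fun i hi => bounds_of_bucket_eq (mem_filter.1 hi).1 (mem_filter.1 hi).2) ?_
  cases s
  · exact Or.inr fun i hi => not_lt.1 (by simpa using hside i hi)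
  · exact Or.inl fun i hi => by simpa using hside i hi

lemma card_image_bucket_le_four_mul_min {h : ℝ} (hh : 0 < h) (hh1 : h ≤ 1) :
    (((relevantSet p q (Int.log 2 h - 3)).image (bucket p q)).card : ℝ) ≤
      4 * min (k : ℝ) (1 + log (1 / h)) := by
  set V := (relevantSet p q (Int.log 2 h - 3)).image (bucket p q)
  have hk : (V.card : ℝ) ≤ k := by
    exact_mod_cast card_image_le.trans ((card_le_univ _).trans (Fintype.card_fin k).le)
  have hL : (V.card : ℝ) ≤ 2 * ((1 - Int.log 2 h).toNat : ℝ) := by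
    have := card_image_bucket_le (p := p) (q := q) (Int.log 2 h - 3)
    rw [show -2 - (Int.log 2 h - 3) = 1 - Int.log 2 h by ring] at this
    exact_mod_cast this
  have := toNat_one_sub_log_two_le hh hh1
  rw [mul_min_of_nonneg _ _ (by norm_num)]
  exact le_min (by linarith [(Nat.cast_nonneg V.card : (0 : ℝ) ≤ _)]) (by linarith)

end Buckets

lemma exists_channel_le_comparableHellingerSq {k ℓ : ℕ} {p q : Fin k → ℝ}
    (hq : ∀ i, 0 ≤ q i) (hq1 : ∑ i, q i ≤ 1) (hh : 0 < hellingerSq p q)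
    (hh1 : hellingerSq p q ≤ 1) (hℓ : 2 < ℓ)
    (hℓm : (ℓ : ℝ) ≤ min (k : ℝ) (1 + log (1 / hellingerSq p q)))
    (hC : hellingerSq p q / 2 ≤ comparableHellingerSq p q) :
    ∃ T : Matrix (Fin ℓ) (Fin k) ℝ, IsChannel T ∧
      1 / 64 * hellingerSq p q * ℓ / min (k : ℝ) (1 + log (1 / hellingerSq p q)) ≤
        comparableHellingerSq (T *ᵥ p) (T *ᵥ q) := by
  set h := hellingerSq p q
  set m := min (k : ℝ) (1 + log (1 / h))
  set R := relevantSet p q (Int.log 2 h - 3)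
  set V := R.image (bucket p q)
  set b : ℤ × Bool → ℝ := fun v => ∑ i ∈ R with bucket p q i = v, (√(q i) - √(p i)) ^ 2
  have hVsum : 3 * h / 8 ≤ ∑ v ∈ V, b v := by
    rw [sum_fiberwise_of_maps_to fun i hi => mem_image_of_mem _ hi]
    exact le_sum_relevantSet_log_sub_three hq hq1 hh hC
  have hℓ3 : (3 : ℝ) ≤ ℓ := by exact_mod_cast hℓ
  obtain ⟨W, hWV, hWn, hW⟩ := V.exists_subset_card_le_mul_sum_le (b := b)
    (fun v _ => sum_nonneg fun i _ => sq_nonneg _) (n := ℓ - 1) (N := 4 * m)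
    (by rw [Nat.cast_pred (by omega)]; linarith) (card_image_bucket_le_four_mul_min hh hh1)
  rw [Nat.cast_pred (by omega)] at hW
  obtain ⟨T, hT, hTW⟩ := exists_channel_sum_fiber_le (ℓ := ℓ) p q R (bucket p q) W (by omega)
    fun v hv => comparable_sum_fiber_bucket (hWV hv)
  refine ⟨T, hT, ?_⟩
  have hWsum : ∑ v ∈ W, b v ≤ 2 * comparableHellingerSq (T *ᵥ p) (T *ᵥ q) :=
    calc ∑ v ∈ W, b v ≤ ∑ v ∈ W, 2 * (√(∑ i ∈ R with bucket p q i = v, q i) -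
          √(∑ i ∈ R with bucket p q i = v, p i)) ^ 2 :=
          sum_le_sum fun v _ => sum_fiber_bucket_le _ v
      _ ≤ _ := by rw [← mul_sum]; gcongr
  have hmain : ((ℓ : ℝ) - 1) * (3 * h / 8) ≤ 8 * m * comparableHellingerSq (T *ᵥ p) (T *ᵥ q) :=
    calc _ ≤ ((ℓ : ℝ) - 1) * ∑ v ∈ V, b v := by
          gcongr
          linarith
      _ ≤ 4 * m * ∑ v ∈ W, b v := hW
      _ ≤ 4 * m * (2 * comparableHellingerSq (T *ᵥ p) (T *ᵥ q)) := by gcongr; linarith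
      _ = _ := by ring
  rw [div_le_iff₀ (by linarith)]
  nlinarith [mul_nonneg hh.le (sub_nonneg.2 hℓ3)]

/-- Reduction to the base case: either a channel to `[ℓ]` retains a large contribution from
comparable elements, or a binary channel preserves the Hellinger divergence. -/
theorem stmt7 :
    ∃ c : ℝ, 0 < c ∧
      ∀ (k : ℕ) (p q : Fin k → ℝ), IsDist p → IsDist q →
        0 < hellingerSq p q → hellingerSq p q ≤ 1 / Real.exp 1 →
        ∀ ℓ : ℕ, 2 < ℓ →
          (ℓ : ℝ) ≤ min (k : ℝ) (1 + Real.log (1 / hellingerSq p q)) →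
          (∃ T : Matrix (Fin ℓ) (Fin k) ℝ, IsChannel T ∧
              c * hellingerSq p q * (ℓ : ℝ) /
                  min (k : ℝ) (1 + Real.log (1 / hellingerSq p q)) ≤
                ∑ i ∈ Finset.univ.filter
                    (fun i => 0 < T.mulVec q i ∧
                      1 / 2 ≤ T.mulVec p i / T.mulVec q i ∧
                      T.mulVec p i / T.mulVec q i ≤ 2),
                  (Real.sqrt (T.mulVec q i) - Real.sqrt (T.mulVec p i)) ^ 2) ∨
          (∃ T : Matrix (Fin 2) (Fin k) ℝ, IsChannel T ∧
              c * hellingerSq p q ≤ hellingerSq (T.mulVec p) (T.mulVec q)) := by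
  refine ⟨1 / 64, by norm_num, fun k p q hp hq hh hhe ℓ hℓ hℓm => ?_⟩
  rcases le_or_gt (hellingerSq p q / 2) (comparableHellingerSq p q) with hC | hC
  · have hh1 : hellingerSq p q ≤ 1 :=
      hhe.trans (div_le_one_of_le₀ (by linarith [add_one_le_exp (1 : ℝ)]) (exp_pos 1).le)
    exact Or.inl (exists_channel_le_comparableHellingerSq hq.1 hq.2.le hh hh1 hℓ hℓm hC)
  · obtain ⟨T, hT, hTH⟩ := exists_binary_channel_hellingerSq_sub_le hp.1 hq.1
    exact Or.inr ⟨T, hT, by linarith⟩
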